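/- Let 𝒢 be a hereditary family of finite digraphs and let c > 0 and a > 1 be constants such that for all integers s,t ≥ 1, every digraph in 𝒢 on at least c·(s·t)^a vertices has a clique of size at least s or an acyclic set of size at least t. Then there exists a constant C > 0 such that every digraph G ∈ 𝒢 on n ≥ 1 vertices satisfies CC(G) ≤ C · n^{1-1/a} · MAIS(G). -/

import Mathlib

/-- A digraph: a finite vertex set (a finset of naturals) together with an
irreflexive edge relation. -/
structure Digr where
  verts : Finset ℕ
  Adj : ℕ → ℕ → Prop
  loopless : ∀ v, ¬ Adj v v

namespace Digr

/-- A clique of a digraph: a set of vertices every two distinct members of which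
are joined by directed edges in both directions. -/
def IsClique (G : Digr) (C : Finset ℕ) : Prop :=
  C ⊆ G.verts ∧ ∀ u ∈ C, ∀ v ∈ C, u ≠ v → G.Adj u v ∧ G.Adj v u

/-- An acyclic set of a digraph: a set of vertices inducing a sub-digraph with
no directed cycle. -/
def IsAcyclicSet (G : Digr) (I : Finset ℕ) : Prop :=
  I ⊆ G.verts ∧ ∀ v, ¬ Relation.TransGen (fun a b => a ∈ I ∧ b ∈ I ∧ G.Adj a b) v v

/-- MAIS: the maximum size of an acyclic set. -/
noncomputable def mais (G : Digr) : ℕ :=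
  sSup {k | ∃ I, G.IsAcyclicSet I ∧ I.card = k}

/-- ω: the maximum size of a clique. -/
noncomputable def cliqueNum (G : Digr) : ℕ :=
  sSup {k | ∃ C, G.IsClique C ∧ C.card = k}

/-- CC: the directed clique cover number, i.e. the minimum number of cliques
whose union is the vertex set. -/
noncomputable def cc (G : Digr) : ℕ :=
  sInf {k | ∃ 𝒞 : Finset (Finset ℕ), 𝒞.card = k ∧ (∀ C ∈ 𝒞, G.IsClique C) ∧
    ∀ v ∈ G.verts, ∃ C ∈ 𝒞, v ∈ C}

/-- The sub-digraph induced by a set of vertices. -/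
def induce (G : Digr) (S : Finset ℕ) : Digr where
  verts := S ∩ G.verts
  Adj := fun a b => a ∈ S ∧ b ∈ S ∧ G.Adj a b
  loopless := fun v h => G.loopless v h.2.2

/-- A family of digraphs is hereditary if it is closed under taking induced
sub-digraphs. -/
def Hereditary (𝒢 : Set Digr) : Prop :=
  ∀ G ∈ 𝒢, ∀ S ⊆ G.verts, G.induce S ∈ 𝒢

-- auxiliary lemmas
lemma isClique_singleton (G : Digr) {v : ℕ} (hv : v ∈ G.verts) : G.IsClique {v} := by
  refine ⟨by simpa using hv, fun u hu w hw huw => ?_⟩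
  simp only [Finset.mem_singleton] at hu hw
  exact absurd (hu.trans hw.symm) huw

lemma no_transGen {α : Type*} {r : α → α → Prop} (h : ∀ x y, ¬ r x y) :
    ∀ u w : α, ¬ Relation.TransGen r u w := by
  intro u w hw
  induction hw with
  | single h' => exact h _ _ h'
  | tail _ h' _ => exact h _ _ h'

lemma isAcyclicSet_empty (G : Digr) : G.IsAcyclicSet ∅ :=
  ⟨Finset.empty_subset _, fun v => no_transGen
    (fun x _ hxy => absurd hxy.1 (Finset.notMem_empty x)) v v⟩

lemma isAcyclicSet_singleton (G : Digr) {v : ℕ} (hv : v ∈ G.verts) : G.IsAcyclicSet {v} := by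
  refine ⟨by simpa using hv, fun w => no_transGen ?_ w w⟩
  rintro x y ⟨hx, hy, hxy⟩
  simp only [Finset.mem_singleton] at hx hy
  subst hx; subst hy
  exact G.loopless _ hxy

lemma mais_bddAbove (G : Digr) :
    BddAbove {k | ∃ I, G.IsAcyclicSet I ∧ I.card = k} := by
  refine ⟨G.verts.card, fun k hk => ?_⟩
  obtain ⟨I, hI, rfl⟩ := hk
  exact Finset.card_le_card hI.1

lemma card_le_mais {G : Digr} {I : Finset ℕ} (h : G.IsAcyclicSet I) : I.card ≤ G.mais :=
  le_csSup (mais_bddAbove G) ⟨I, h, rfl⟩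

lemma one_le_mais {G : Digr} (h : G.verts.Nonempty) : 1 ≤ G.mais := by
  obtain ⟨v, hv⟩ := h
  simpa using card_le_mais (isAcyclicSet_singleton G hv)

lemma induce_verts_subset (G : Digr) (S : Finset ℕ) : (G.induce S).verts ⊆ G.verts :=
  fun x hx => (Finset.mem_inter.mp hx).2

lemma mais_induce_le (G : Digr) (S : Finset ℕ) : (G.induce S).mais ≤ G.mais := by
  rw [show (G.induce S).mais = sSup {k | ∃ I, (G.induce S).IsAcyclicSet I ∧ I.card = k} from rfl]
  refine csSup_le ⟨0, ⟨∅, isAcyclicSet_empty _, Finset.card_empty⟩⟩ ?_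
  rintro k ⟨I, hI, rfl⟩
  refine card_le_mais ⟨hI.1.trans (induce_verts_subset G S), fun v hv => hI.2 v ?_⟩
  refine Relation.TransGen.mono (fun x y hxy => ?_) _ _ hv
  have hxS : x ∈ S := (Finset.mem_inter.mp (hI.1 hxy.1)).1
  have hyS : y ∈ S := (Finset.mem_inter.mp (hI.1 hxy.2.1)).1
  exact ⟨hxy.1, hxy.2.1, hxS, hyS, hxy.2.2⟩

lemma isClique_of_induce {G : Digr} {S C : Finset ℕ} (h : (G.induce S).IsClique C) :
    G.IsClique C := by
  refine ⟨h.1.trans (induce_verts_subset G S), fun u hu v hv huv => ?_⟩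
  obtain ⟨h1, h2⟩ := h.2 u hu v hv huv
  exact ⟨h1.2.2, h2.2.2⟩

lemma cc_le {G : Digr} {𝒞 : Finset (Finset ℕ)} (h1 : ∀ C ∈ 𝒞, G.IsClique C)
    (h2 : ∀ v ∈ G.verts, ∃ C ∈ 𝒞, v ∈ C) : G.cc ≤ 𝒞.card :=
  Nat.sInf_le ⟨𝒞, rfl, h1, h2⟩

lemma cc_spec (G : Digr) : ∃ 𝒞 : Finset (Finset ℕ), 𝒞.card = G.cc ∧
    (∀ C ∈ 𝒞, G.IsClique C) ∧ ∀ v ∈ G.verts, ∃ C ∈ 𝒞, v ∈ C := by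
  have hne : {k | ∃ 𝒞 : Finset (Finset ℕ), 𝒞.card = k ∧ (∀ C ∈ 𝒞, G.IsClique C) ∧
      ∀ v ∈ G.verts, ∃ C ∈ 𝒞, v ∈ C}.Nonempty := by
    refine ⟨(G.verts.image fun v => ({v} : Finset ℕ)).card,
      G.verts.image fun v => ({v} : Finset ℕ), rfl, ?_, ?_⟩
    · intro C hC
      obtain ⟨v, hv, rfl⟩ := Finset.mem_image.mp hC
      exact isClique_singleton G hv
    · intro v hv
      exact ⟨{v}, Finset.mem_image_of_mem _ hv, Finset.mem_singleton_self v⟩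
  obtain ⟨𝒞, h⟩ := Nat.sInf_mem hne
  exact ⟨𝒞, h⟩

lemma cc_le_card (G : Digr) : G.cc ≤ G.verts.card := by
  calc G.cc ≤ (G.verts.image fun v => ({v} : Finset ℕ)).card := by
        refine cc_le ?_ ?_
        · intro C hC
          obtain ⟨v, hv, rfl⟩ := Finset.mem_image.mp hC
          exact isClique_singleton G hv
        · intro v hv
          exact ⟨{v}, Finset.mem_image_of_mem _ hv, Finset.mem_singleton_self v⟩
    _ ≤ G.verts.card := Finset.card_image_le

end Digr

set_option maxHeartbeats 1000000 in
/-- Let 𝒢 be a hereditary family of digraphs and `c > 0`,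
`a > 1` such that for all `s,t ≥ 1`, every digraph in 𝒢 on at least
`c·(s·t)^a` vertices has a clique of size ≥ `s` or an acyclic set of size ≥ `t`.
Then there is a constant `C > 0` such that every `G ∈ 𝒢` on `n ≥ 1` vertices
satisfies `CC(G) ≤ C · n^(1-1/a) · MAIS(G)`. -/
theorem stmt8 (𝒢 : Set Digr) (h𝒢 : Digr.Hereditary 𝒢) (c a : ℝ) (hc : 0 < c) (ha : 1 < a)
    (hRamsey : ∀ s t : ℕ, 1 ≤ s → 1 ≤ t → ∀ G ∈ 𝒢,
      c * ((s : ℝ) * (t : ℝ)) ^ a ≤ (G.verts.card : ℝ) →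
      (∃ C : Finset ℕ, G.IsClique C ∧ s ≤ C.card) ∨
      (∃ I : Finset ℕ, G.IsAcyclicSet I ∧ t ≤ I.card)) :
    ∃ C : ℝ, 0 < C ∧ ∀ G ∈ 𝒢, 1 ≤ G.verts.card →
      (G.cc : ℝ) ≤ C * (G.verts.card : ℝ) ^ (1 - 1 / a) * (G.mais : ℝ) := by
  have ha0 : (0:ℝ) < a := lt_trans one_pos ha
  set b : ℝ := 1 - 1/a with hbdef
  have hb0 : 0 < b := by
    have h : 1/a < 1 := by rw [div_lt_one ha0]; exact ha
    simp only [hbdef]; linarith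
  have hb1 : b < 1 := by
    have h : 0 < 1/a := by positivity
    simp only [hbdef]; linarith
  have hw : (0:ℝ) < c ^ (1/a) := Real.rpow_pos_of_pos hc _
  set W : ℝ := c ^ (1/a) with hWdef
  set CC : ℝ := 4 * W / b with hCC
  have hCpos : 0 < CC := by positivity
  refine ⟨CC, hCpos, ?_⟩
  suffices H : ∀ n : ℕ, ∀ G ∈ 𝒢, G.verts.card = n →
      (G.cc : ℝ) ≤ CC * (n : ℝ) ^ b * (G.mais : ℝ) by
    intro G hG _
    exact H G.verts.card G hG rfl
  intro n
  induction n using Nat.strong_induction_on with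
  | _ n IH =>
  intro G hG hn
  rcases Nat.eq_zero_or_pos n with rfl | hn1
  · -- n = 0 : empty graph
    have hvempty : G.verts = ∅ := Finset.card_eq_zero.mp hn
    have hcc : G.cc = 0 := by
      have h := Digr.cc_le (G := G) (𝒞 := ∅) (by simp) (by simp [hvempty])
      simpa using h
    rw [hcc]
    push_cast
    positivity
  -- n ≥ 1
  have hvne : G.verts.Nonempty := Finset.card_pos.mp (hn ▸ hn1)
  have hα1 : 1 ≤ G.mais := Digr.one_le_mais hvne
  set α : ℕ := G.mais with hα
  set t : ℕ := α + 1 with ht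
  have hnR : (0:ℝ) < (n:ℝ) := by exact_mod_cast hn1
  have htR : (1:ℝ) ≤ (t:ℝ) := by exact_mod_cast Nat.le_add_left 1 α
  have htpos : (0:ℝ) < (t:ℝ) := lt_of_lt_of_le one_pos htR
  have htα : (t:ℝ) ≤ 2 * (α:ℝ) := by
    have h : (1:ℝ) ≤ (α:ℝ) := by exact_mod_cast hα1
    rw [ht]; push_cast; linarith
  have hαR : (1:ℝ) ≤ (α:ℝ) := by exact_mod_cast hα1
  have hnb : (0:ℝ) ≤ (n:ℝ)^b := Real.rpow_nonneg hnR.le _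
  by_cases hbig : c * (2*(t:ℝ)) ^ a ≤ (n:ℝ)
  · -- main case : find a big clique and recurse
    set x : ℝ := ((n:ℝ)/c) ^ (1/a) with hxdef
    have hxpos : 0 < x := Real.rpow_pos_of_pos (div_pos hnR hc) _
    have hx2t : 2*(t:ℝ) ≤ x := by
      have h1 : (2*(t:ℝ))^a ≤ (n:ℝ)/c := by
        rw [le_div_iff₀ hc]; nlinarith [hbig]
      calc 2*(t:ℝ) = ((2*(t:ℝ))^a)^(1/a) := by
            rw [← Real.rpow_mul (by positivity), mul_one_div_cancel ha0.ne', Real.rpow_one]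
        _ ≤ x := Real.rpow_le_rpow (by positivity) h1 (by positivity)
    set s : ℕ := ⌊x / (t:ℝ)⌋₊ with hs
    have hxt1 : (1:ℝ) ≤ x / t := by
      rw [le_div_iff₀ htpos]; nlinarith
    have hs1 : 1 ≤ s := by
      rw [hs]; exact Nat.le_floor (by exact_mod_cast hxt1)
    have hsle : (s:ℝ) ≤ x / t := Nat.floor_le (by positivity)
    have hsge : x / (2*(t:ℝ)) ≤ (s:ℝ) := by
      have h2 : x / t - 1 < (s:ℝ) := by exact_mod_cast Nat.sub_one_lt_floor (x/(t:ℝ))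
      have h4 : 1 ≤ x/(2*(t:ℝ)) := by rw [le_div_iff₀ (by positivity)]; linarith
      have h5 : x/(t:ℝ) = 2*(x/(2*(t:ℝ))) := by field_simp
      linarith
    have hram := hRamsey s t hs1 (Nat.le_add_left 1 α) G hG (by
      rw [hn]
      have h6 : (s:ℝ)*(t:ℝ) ≤ x := by
        calc (s:ℝ)*(t:ℝ) ≤ (x/t)*t := mul_le_mul_of_nonneg_right hsle htpos.le
          _ = x := div_mul_cancel₀ x htpos.ne'
      calc c * ((s:ℝ)*(t:ℝ))^a ≤ c * x^a := by
            have := Real.rpow_le_rpow (by positivity) h6 ha0.le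
            nlinarith
        _ = (n:ℝ) := by
            rw [hxdef, ← Real.rpow_mul (by positivity), one_div_mul_cancel ha0.ne',
              Real.rpow_one, mul_div_cancel₀ _ hc.ne'])
    rcases hram with ⟨K, hK, hsK⟩ | ⟨I, hI, htI⟩
    swap
    · exfalso
      have h7 : I.card ≤ α := Digr.card_le_mais hI
      omega
    have hKsub : K ⊆ G.verts := hK.1
    have hKcard1 : 1 ≤ K.card := le_trans hs1 hsK
    set G' : Digr := G.induce (G.verts \ K) with hG'def
    have hG' : G' ∈ 𝒢 := h𝒢 G hG _ Finset.sdiff_subset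
    have hG'verts : G'.verts = G.verts \ K :=
      Finset.inter_eq_left.mpr Finset.sdiff_subset
    set n' : ℕ := G'.verts.card with hn'
    have hKn : K.card ≤ n := hn ▸ Finset.card_le_card hKsub
    have hn'eq : n' = n - K.card := by
      rw [hn', hG'verts, Finset.card_sdiff_of_subset hKsub, hn]
    have hn'lt : n' < n := by omega
    have hIH := IH n' hn'lt G' hG' rfl
    -- covering step : cc G ≤ cc G' + 1
    obtain ⟨𝒞', h𝒞card, h𝒞cl, h𝒞cov⟩ := Digr.cc_spec G'
    have hccstep : G.cc ≤ G'.cc + 1 := by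
      have hle := Digr.cc_le (G := G) (𝒞 := insert K 𝒞') (by
        intro C hC
        rcases Finset.mem_insert.mp hC with rfl | hC'
        · exact hK
        · exact Digr.isClique_of_induce (h𝒞cl C hC')) (by
        intro v hv
        by_cases hvK : v ∈ K
        · exact ⟨K, Finset.mem_insert_self _ _, hvK⟩
        · have hv' : v ∈ G'.verts := by
            rw [hG'verts]; exact Finset.mem_sdiff.mpr ⟨hv, hvK⟩
          obtain ⟨C, hC, hvC⟩ := h𝒞cov v hv'
          exact ⟨C, Finset.mem_insert_of_mem hC, hvC⟩)
      calc G.cc ≤ (insert K 𝒞').card := hle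
        _ ≤ 𝒞'.card + 1 := Finset.card_insert_le _ _
        _ = G'.cc + 1 := by rw [h𝒞card]
    have hmais' : (G'.mais : ℝ) ≤ (α : ℝ) := by
      exact_mod_cast Digr.mais_induce_le G (G.verts \ K)
    have hn'R : (n' : ℝ) ≤ (n:ℝ) - (s:ℝ) := by
      rw [hn'eq, Nat.cast_sub hKn]
      have h8 : (s:ℝ) ≤ (K.card:ℝ) := by exact_mod_cast hsK
      linarith
    have hn'0 : (0:ℝ) ≤ (n':ℝ) := Nat.cast_nonneg _
    -- Bernoulli
    have hsn : (s:ℝ) ≤ (n:ℝ) := by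
      have h8 : (s:ℝ) ≤ (K.card:ℝ) := by exact_mod_cast hsK
      have h9 : (K.card:ℝ) ≤ (n:ℝ) := by exact_mod_cast hKn
      linarith
    have hu1 : (s:ℝ)/(n:ℝ) ≤ 1 := by rw [div_le_one hnR]; exact hsn
    have hu0 : 0 ≤ (s:ℝ)/(n:ℝ) := by positivity
    have hbern : ((n:ℝ) - (s:ℝ))^b ≤ (n:ℝ)^b * (1 - b * ((s:ℝ)/(n:ℝ))) := by
      have h7 : (1 - (s:ℝ)/(n:ℝ)) ^ b ≤ 1 - b * ((s:ℝ)/(n:ℝ)) := by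
        have h := rpow_one_add_le_one_add_mul_self (s := -((s:ℝ)/(n:ℝ)))
          (by linarith) hb0.le hb1.le
        simpa [sub_eq_add_neg, mul_neg] using h
      calc ((n:ℝ) - (s:ℝ))^b = ((n:ℝ) * (1 - (s:ℝ)/(n:ℝ)))^b := by
            rw [mul_sub, mul_one, mul_div_cancel₀ _ hnR.ne']
        _ = (n:ℝ)^b * (1 - (s:ℝ)/(n:ℝ))^b := Real.mul_rpow hnR.le (by linarith)
        _ ≤ (n:ℝ)^b * (1 - b*((s:ℝ)/(n:ℝ))) := mul_le_mul_of_nonneg_left h7 hnb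
    -- the key quantitative estimate
    set q : ℝ := (n:ℝ)^(1/a) with hqdef
    have hq : 0 < q := Real.rpow_pos_of_pos hnR _
    have hNq : (n:ℝ)^b * q = (n:ℝ) := by
      rw [hqdef, ← Real.rpow_add hnR, hbdef, sub_add_cancel, Real.rpow_one]
    have hxqw : x = q / W := by
      rw [hxdef, hqdef, hWdef, Real.div_rpow hnR.le hc.le]
    have hrw : ((s:ℝ)/(n:ℝ)) * (n:ℝ)^b = (s:ℝ) / q := by
      rw [eq_div_iff hq.ne', div_mul_eq_mul_div, div_mul_eq_mul_div, div_eq_iff hnR.ne',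
        mul_assoc, hNq]
    have h10 : q/(W*(2*(t:ℝ))) ≤ (s:ℝ) := by
      have h := hsge
      rw [hxqw, div_div] at h
      exact h
    have h12 : q ≤ (s:ℝ) * (W*(2*(t:ℝ))) := (div_le_iff₀ (by positivity)).mp h10
    have h13 : 1/(W*(2*(t:ℝ))) ≤ (s:ℝ)/q := by
      rw [div_le_div_iff₀ (by positivity) hq, one_mul]
      linarith [h12]
    have hkey : 1 ≤ CC * (α:ℝ) * b * ((s:ℝ)/q) := by
      have h14 : CC * (α:ℝ) * b * (1/(W*(2*(t:ℝ)))) = 2*(α:ℝ)/(t:ℝ) := by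
        rw [hCC]; field_simp; ring
      have h15 : (1:ℝ) ≤ 2*(α:ℝ)/(t:ℝ) := by
        rw [le_div_iff₀ htpos]; linarith
      have h16 : CC * (α:ℝ) * b * (1/(W*(2*(t:ℝ)))) ≤ CC * (α:ℝ) * b * ((s:ℝ)/q) := by
        apply mul_le_mul_of_nonneg_left h13
        positivity
      linarith
    have hkey' : 1 ≤ CC * (α:ℝ) * b * (((s:ℝ)/(n:ℝ)) * (n:ℝ)^b) := by
      rw [hrw]; exact hkey
    -- assemble
    have hstep1 : (G.cc : ℝ) ≤ (G'.cc : ℝ) + 1 := by exact_mod_cast hccstep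
    have hn'b : (n':ℝ)^b ≤ ((n:ℝ) - (s:ℝ))^b := Real.rpow_le_rpow hn'0 hn'R hb0.le
    have hmais0 : (0:ℝ) ≤ (G'.mais : ℝ) := Nat.cast_nonneg _
    have hstep2 : (G'.cc : ℝ) ≤ CC * ((n:ℝ) - (s:ℝ))^b * (α:ℝ) := by
      calc (G'.cc : ℝ) ≤ CC * (n':ℝ)^b * (G'.mais : ℝ) := hIH
        _ ≤ CC * (n':ℝ)^b * (α:ℝ) := by
            apply mul_le_mul_of_nonneg_left hmais'
            positivity
        _ ≤ CC * ((n:ℝ) - (s:ℝ))^b * (α:ℝ) := by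
            apply mul_le_mul_of_nonneg_right _ (by positivity)
            exact mul_le_mul_of_nonneg_left hn'b hCpos.le
    have hstep3 : CC * ((n:ℝ) - (s:ℝ))^b * (α:ℝ) ≤
        CC * ((n:ℝ)^b * (1 - b * ((s:ℝ)/(n:ℝ)))) * (α:ℝ) := by
      apply mul_le_mul_of_nonneg_right _ (by positivity)
      exact mul_le_mul_of_nonneg_left hbern hCpos.le
    have hfin : CC * ((n:ℝ)^b * (1 - b * ((s:ℝ)/(n:ℝ)))) * (α:ℝ) + 1 ≤
        CC * (n:ℝ)^b * (α:ℝ) := by nlinarith [hkey']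
    linarith [hstep1, hstep2, hstep3, hfin]
  · -- base case : n is small
    push_neg at hbig
    have hccn : (G.cc : ℝ) ≤ (n:ℝ) := by exact_mod_cast hn ▸ Digr.cc_le_card G
    have hsplit : (n:ℝ) = (n:ℝ)^b * (n:ℝ)^(1/a) := by
      rw [← Real.rpow_add hnR, hbdef, sub_add_cancel, Real.rpow_one]
    have h1 : (n:ℝ) ^ (1/a) ≤ W * (2*(t:ℝ)) := by
      have h2 : (n:ℝ) ^ (1/a) ≤ (c * (2*(t:ℝ))^a) ^ (1/a) :=
        Real.rpow_le_rpow hnR.le hbig.le (by positivity)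
      calc (n:ℝ) ^ (1/a) ≤ (c * (2*(t:ℝ))^a) ^ (1/a) := h2
        _ = W * (2*(t:ℝ)) := by
            rw [hWdef, Real.mul_rpow hc.le (by positivity),
              ← Real.rpow_mul (by positivity), mul_one_div_cancel ha0.ne', Real.rpow_one]
    have h3 : 4 * W ≤ CC := by
      rw [hCC, le_div_iff₀ hb0]
      nlinarith
    calc (G.cc : ℝ) ≤ (n:ℝ) := hccn
      _ = (n:ℝ)^b * (n:ℝ)^(1/a) := hsplit
      _ ≤ (n:ℝ)^b * (W * (2*(t:ℝ))) := mul_le_mul_of_nonneg_left h1 hnb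
      _ ≤ (n:ℝ)^b * (W * (4*(α:ℝ))) := by
          apply mul_le_mul_of_nonneg_left _ hnb
          nlinarith
      _ = (4 * W) * (n:ℝ)^b * (α:ℝ) := by ring
      _ ≤ CC * (n:ℝ)^b * (α:ℝ) := by
          apply mul_le_mul_of_nonneg_right _ (by positivity)
          exact mul_le_mul_of_nonneg_right h3 hnb
      _ = CC * (n:ℝ)^b * (G.mais:ℝ) := by rw [hα]
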